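/- arXiv:2011.07919 — 3 statements merged into one kernel-verified Lean document; each statement's English description precedes it below -/
import Mathlib

section
/- Céa's lemma: under the hypotheses of Lax–Milgram with continuity constant M and coercivity constant α, the Galerkin solution uₕ ∈ Vₕ satisfies ‖u − uₕ‖ ≤ (M/α) · inf over vₕ ∈ Vₕ of ‖u − vₕ‖. -/
/-!
Galerkin orthogonality `a(u - uₕ, wₕ) = 0` for `wₕ ∈ Vₕ` lets one replace the second argument in
`a(u - uₕ, u - uₕ)` by `u - vₕ` for any `vₕ ∈ Vₕ`; coercivity and boundedness then give
`α ‖u - uₕ‖² ≤ M ‖u - uₕ‖ ‖u - vₕ‖`; divide by `‖u - uₕ‖` and take the infimum over `vₕ`.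
-/

open Metric

theorem galerkin_orthogonality {R M N P : Type*} [CommSemiring R] [AddCommGroup M] [Module R M]
    [AddCommMonoid N] [Module R N] [AddCommGroup P] [Module R P]
    (a : M →ₗ[R] N →ₗ[R] P) (L : N → P) (W : Submodule R N) {u uh : M}
    (hu : ∀ w ∈ W, a u w = L w) (huh : ∀ w ∈ W, a uh w = L w) :
    ∀ w ∈ W, a (u - uh) w = 0 := fun w hw => by
  rw [map_sub, LinearMap.sub_apply, hu w hw, huh w hw, sub_self]

theorem apply_sub_self_eq_apply_sub {R M P : Type*} [CommRing R] [AddCommGroup M] [Module R M]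
    [AddCommGroup P] [Module R P] (a : M →ₗ[R] M →ₗ[R] P) {W : Submodule R M} {u uh vh : M}
    (horth : ∀ w ∈ W, a (u - uh) w = 0) (huh : uh ∈ W) (hvh : vh ∈ W) :
    a (u - uh) (u - uh) = a (u - uh) (u - vh) := by
  rw [← sub_eq_zero, ← map_sub, sub_sub_sub_cancel_left, horth _ (W.sub_mem hvh huh)]

section Coercive

variable {V : Type*} [NormedAddCommGroup V] [Module ℝ V] {a : V →ₗ[ℝ] V →ₗ[ℝ] ℝ} {M α : ℝ}

theorem mul_norm_sq_le_of_apply_self_eq (hbdd : ∀ w v : V, |a w v| ≤ M * ‖w‖ * ‖v‖)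
    (hcoercive : ∀ v : V, α * ‖v‖ ^ 2 ≤ a v v) (e d : V) (h : a e e = a e d) :
    α * ‖e‖ ^ 2 ≤ M * ‖e‖ * ‖d‖ :=
  calc α * ‖e‖ ^ 2 ≤ a e e := hcoercive e
    _ = a e d := h
    _ ≤ M * ‖e‖ * ‖d‖ := (le_abs_self _).trans (hbdd e d)

theorem coercivity_le_bound (hbdd : ∀ w v : V, |a w v| ≤ M * ‖w‖ * ‖v‖)
    (hcoercive : ∀ v : V, α * ‖v‖ ^ 2 ≤ a v v) {v : V} (hv : v ≠ 0) : α ≤ M := by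
  have h := mul_norm_sq_le_of_apply_self_eq hbdd hcoercive v v rfl
  rw [mul_assoc, ← sq] at h
  exact le_of_mul_le_mul_right h (by positivity)

theorem mul_norm_le_of_apply_self_eq (hbdd : ∀ w v : V, |a w v| ≤ M * ‖w‖ * ‖v‖)
    (hcoercive : ∀ v : V, α * ‖v‖ ^ 2 ≤ a v v) {e d : V} (he : e ≠ 0) (h : a e e = a e d) :
    α * ‖e‖ ≤ M * ‖d‖ := by
  have hsq := mul_norm_sq_le_of_apply_self_eq hbdd hcoercive e d h
  rw [sq, ← mul_assoc, mul_right_comm M] at hsq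
  exact le_of_mul_le_mul_right hsq (norm_pos_iff.2 he)

end Coercive

theorem cea_lemma_general (V : Type*) [NormedAddCommGroup V] [InnerProductSpace ℝ V]
    (a : V →ₗ[ℝ] V →ₗ[ℝ] ℝ)
    (M α : ℝ) (hα : 0 < α)
    (hbdd : ∀ w v : V, |a w v| ≤ M * ‖w‖ * ‖v‖)
    (hcoercive : ∀ v : V, α * ‖v‖ ^ 2 ≤ a v v)
    (L : V →ₗ[ℝ] ℝ)
    (Vh : Submodule ℝ V) (u uh : V)
    (hu : ∀ v : V, a u v = L v)
    (huh : uh ∈ Vh)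
    (hgal : ∀ vh ∈ Vh, a uh vh = L vh) :
    ‖u - uh‖ ≤ (M / α) * ⨅ vh : Vh, ‖u - (vh : V)‖ := by
  have hinf : ⨅ vh : Vh, ‖u - (vh : V)‖ = infDist u Vh := by
    simp_rw [infDist_eq_iInf, dist_eq_norm]
    rfl
  rw [hinf]
  rcases eq_or_ne u uh with rfl | hne
  · rw [infDist_zero_of_mem huh, sub_self, norm_zero, mul_zero]
  have horth := galerkin_orthogonality a L Vh (fun w _ => hu w) hgal
  have hM : 0 < M := hα.trans_le (coercivity_le_bound hbdd hcoercive (sub_ne_zero.2 hne))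
  rw [div_mul_eq_mul_div, le_div_iff₀' hα, ← div_le_iff₀' hM]
  refine (le_infDist ⟨uh, huh⟩).2 fun vh hvh => ?_
  rw [div_le_iff₀' hM, dist_eq_norm]
  exact mul_norm_le_of_apply_self_eq hbdd hcoercive (sub_ne_zero.2 hne)
    (apply_sub_self_eq_apply_sub a horth huh hvh)

/-- Céa's lemma: under the Lax–Milgram hypotheses with continuity constant `M`
and coercivity constant `α`, the Galerkin solution `uₕ ∈ Vₕ` satisfies
`‖u - uₕ‖ ≤ (M/α) ⨅ vₕ ∈ Vₕ, ‖u - vₕ‖`. -/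
theorem cea_lemma (V : Type*) [NormedAddCommGroup V] [InnerProductSpace ℝ V]
    [CompleteSpace V]
    (a : V →ₗ[ℝ] V →ₗ[ℝ] ℝ)
    (M α : ℝ) (hα : 0 < α)
    (hbdd : ∀ w v : V, |a w v| ≤ M * ‖w‖ * ‖v‖)
    (hcoercive : ∀ v : V, α * ‖v‖ ^ 2 ≤ a v v)
    (L : V →ₗ[ℝ] ℝ)
    (Vh : Submodule ℝ V) (u uh : V)
    (hu : ∀ v : V, a u v = L v)
    (huh : uh ∈ Vh)
    (hgal : ∀ vh ∈ Vh, a uh vh = L vh) :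
    ‖u - uh‖ ≤ (M / α) * ⨅ vh : Vh, ‖u - (vh : V)‖ :=
  cea_lemma_general V a M α hα hbdd hcoercive L Vh u uh hu huh hgal
end

section
/- For the Delaunay edge-flip criterion: given a convex quadrilateral ABCD triangulated by the diagonal AC into triangles ABC and ACD, the point D lies strictly inside the circumcircle of triangle ABC if and only if the point B lies strictly inside the circumcircle of triangle ACD. -/
noncomputable section

/-- The plane. -/
abbrev Plane := EuclideanSpace ℝ (Fin 2)

/-- The circumcenter of the nondegenerate triangle `A B C`. -/
def circumcenter3 (A B C : Plane) (h : AffineIndependent ℝ ![A, B, C]) : Plane :=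
  (⟨![A, B, C], h⟩ : Affine.Simplex ℝ Plane 2).circumcenter

/-- The circumradius of the nondegenerate triangle `A B C`. -/
def circumradius3 (A B C : Plane) (h : AffineIndependent ℝ ![A, B, C]) : ℝ :=
  (⟨![A, B, C], h⟩ : Affine.Simplex ℝ Plane 2).circumradius

/-- `D` lies strictly inside the circumcircle of the triangle `A B C`. -/
def StrictlyInsideCircumcircle (D A B C : Plane)
    (h : AffineIndependent ℝ ![A, B, C]) : Prop :=
  dist D (circumcenter3 A B C h) < circumradius3 A B C h

/-!
The difference of the powers of a point with respect to the circles `ABC` and `ACD` is an affine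
function of the point, since the quadratic terms cancel. It vanishes at `A` and `C`, hence at the
point where the diagonals cross, which is a strict convex combination of `B` and `D`; so its values
at `B` and `D` are both zero or of opposite signs. At `D` it is the power of `D` with respect to
`ABC`, at `B` minus the power of `B` with respect to `ACD`, and a point is strictly inside a circle
iff its power is negative.
-/

open scoped RealInnerProductSpace

theorem AffineMap.neg_iff_pos_of_openSegment_inter_nonempty {𝕜 E : Type*} [Field 𝕜]
    [LinearOrder 𝕜] [IsStrictOrderedRing 𝕜] [AddCommGroup E] [Module 𝕜 E] (g : E →ᵃ[𝕜] 𝕜)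
    {a b c d : E} (ha : g a = 0) (hc : g c = 0)
    (h : (openSegment 𝕜 a c ∩ openSegment 𝕜 b d).Nonempty) : g b < 0 ↔ 0 < g d := by
  obtain ⟨p, hac, ⟨s, t, hs, ht, hst, rfl⟩⟩ := h
  have hgp : g (s • b + t • d) = 0 := by
    simpa [ha, hc, openSegment_same] using Set.mem_image_of_mem g hac
  rw [Convex.combo_affine_apply hst, smul_eq_mul, smul_eq_mul] at hgp
  constructor <;> intro <;> nlinarith

namespace EuclideanGeometry.Sphere

section Torsor

variable {V P : Type*} [NormedAddCommGroup V] [InnerProductSpace ℝ V] [MetricSpace P]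
  [NormedAddTorsor V P]

theorem power_eq_zero_of_mem {s : Sphere P} {p : P} (hp : p ∈ s) : s.power p = 0 := by
  rw [power, mem_sphere.1 hp, sub_self]

def powerSub (s₁ s₂ : Sphere P) : P →ᵃ[ℝ] ℝ where
  toFun p := s₁.power p - s₂.power p
  linear := (2 : ℝ) • innerₛₗ ℝ (s₂.center -ᵥ s₁.center)
  map_vadd' p v := by
    have hsq (c : P) : dist (v +ᵥ p) c ^ 2 = ‖v‖ ^ 2 + 2 * ⟪v, p -ᵥ c⟫ + dist p c ^ 2 := by
      rw [dist_eq_norm_vsub V, dist_eq_norm_vsub V, vadd_vsub_assoc, norm_add_sq_real]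
    simp only [power, hsq, LinearMap.smul_apply, innerₛₗ_apply_apply, smul_eq_mul]
    rw [← vsub_sub_vsub_cancel_left s₂.center s₁.center p, inner_sub_left, real_inner_comm v,
      real_inner_comm v, vadd_eq_add]
    ring

@[simp]
theorem powerSub_apply (s₁ s₂ : Sphere P) (p : P) :
    s₁.powerSub s₂ p = s₁.power p - s₂.power p :=
  rfl

end Torsor

theorem power_neg_iff_power_neg_of_openSegment_inter_nonempty {V : Type*}
    [NormedAddCommGroup V] [InnerProductSpace ℝ V] {s₁ s₂ : Sphere V} {a b c d : V}
    (ha₁ : a ∈ s₁) (hc₁ : c ∈ s₁) (hb₁ : b ∈ s₁) (ha₂ : a ∈ s₂) (hc₂ : c ∈ s₂) (hd₂ : d ∈ s₂)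
    (h : (openSegment ℝ a c ∩ openSegment ℝ b d).Nonempty) :
    s₁.power d < 0 ↔ s₂.power b < 0 := by
  have hsign := (s₂.powerSub s₁).neg_iff_pos_of_openSegment_inter_nonempty
    (by simp [power_eq_zero_of_mem ha₁, power_eq_zero_of_mem ha₂])
    (by simp [power_eq_zero_of_mem hc₁, power_eq_zero_of_mem hc₂]) h
  simp only [powerSub_apply, power_eq_zero_of_mem hb₁, power_eq_zero_of_mem hd₂] at hsign
  rw [sub_zero, zero_sub, neg_pos] at hsign
  exact hsign.symm

end EuclideanGeometry.Sphere

open EuclideanGeometry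

theorem strictlyInsideCircumcircle_iff_power_neg {D A B C : Plane}
    (h : AffineIndependent ℝ ![A, B, C]) :
    StrictlyInsideCircumcircle D A B C h ↔
      (⟨![A, B, C], h⟩ : Affine.Simplex ℝ Plane 2).circumsphere.power D < 0 :=
  (Sphere.power_neg_iff_dist_center_lt_radius (Affine.Simplex.circumradius_nonneg _)).symm

theorem incircle_test_symm_general (A B C D : Plane)
    (hABC : AffineIndependent ℝ ![A, B, C])
    (hACD : AffineIndependent ℝ ![A, C, D])
    (hconv : (openSegment ℝ A C ∩ openSegment ℝ B D).Nonempty) :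
    StrictlyInsideCircumcircle D A B C hABC ↔
      StrictlyInsideCircumcircle B A C D hACD := by
  set T₁ : Affine.Simplex ℝ Plane 2 := ⟨![A, B, C], hABC⟩
  set T₂ : Affine.Simplex ℝ Plane 2 := ⟨![A, C, D], hACD⟩
  rw [strictlyInsideCircumcircle_iff_power_neg, strictlyInsideCircumcircle_iff_power_neg]
  exact Sphere.power_neg_iff_power_neg_of_openSegment_inter_nonempty (T₁.mem_circumsphere 0)
    (T₁.mem_circumsphere 2) (T₁.mem_circumsphere 1) (T₂.mem_circumsphere 0)
    (T₂.mem_circumsphere 1) (T₂.mem_circumsphere 2) hconv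

/-- Symmetry of the Delaunay in-circle test: for a convex quadrilateral `ABCD`
(its diagonals `AC` and `BD` cross, and no three of the points are collinear),
`D` lies strictly inside the circumcircle of `ABC` iff `B` lies strictly inside
the circumcircle of `ACD`. -/
theorem incircle_test_symm (A B C D : Plane)
    (hABC : AffineIndependent ℝ ![A, B, C])
    (hACD : AffineIndependent ℝ ![A, C, D])
    (hABD : AffineIndependent ℝ ![A, B, D])
    (hBCD : AffineIndependent ℝ ![B, C, D])
    (hconv : (openSegment ℝ A C ∩ openSegment ℝ B D).Nonempty) :
    StrictlyInsideCircumcircle D A B C hABC ↔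
      StrictlyInsideCircumcircle B A C D hACD :=
  incircle_test_symm_general A B C D hABC hACD hconv

end
end

section
/- Flipping a non-Delaunay edge strictly increases the minimum of the six angles of the two triangles in the quadrilateral: if D lies strictly inside the circumcircle of ABC for convex quadrilateral ABCD, then the minimum angle among the triangles ABD and BCD is strictly greater than the minimum angle among the triangles ABC and ACD. -/
/-!
Let `X` be the crossing point of the diagonals. As `D` lies inside the circle through `A B C`, on
the same side of `AB` as `C` and on the same side of `BC` as `A`, it sees these chords under larger
angles: `∠ACB < ∠ADB` and `∠BAC < ∠BDC`. The triangles `ABX` and `CDX` share the vertical angle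
at `X`, so `∠BAC + ∠ABD = ∠ACD + ∠BDC`, whence `∠ACD < ∠ABD`; in the same way `∠CAD < ∠CBD`.
Finally the diagonal `AC` splits the angles at `A` and `C`, so `∠BAC < ∠BAD` and
`∠ACD < ∠BCD`. Every angle after the flip thus exceeds an angle before it.
-/

noncomputable section

/-- The minimum interior angle of the triangle `A B C`. -/
def minAngle (A B C : Plane) : ℝ :=
  min (EuclideanGeometry.angle B A C)
    (min (EuclideanGeometry.angle A B C) (EuclideanGeometry.angle A C B))

open EuclideanGeometry Module

instance : Fact (finrank ℝ Plane = 2) := ⟨finrank_euclideanSpace_fin⟩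

section Affine

variable {V P : Type*} [AddCommGroup V] [Module ℝ V] [AddTorsor V P]

theorem sbtw_of_mem_openSegment {a b x : V} (hx : x ∈ openSegment ℝ a b) (hab : a ≠ b) :
    Sbtw ℝ a x b :=
  sbtw_iff_mem_image_Ioo_and_ne.2 ⟨openSegment_eq_image_lineMap ℝ a b ▸ hx, hab⟩

theorem AffineIndependent.notMem_affineSpan_pair {a b c : P}
    (h : AffineIndependent ℝ ![a, b, c]) : c ∉ line[ℝ, a, b] := fun hc =>
  affineIndependent_iff_not_collinear_set.1 h <| collinear_triple_of_mem_affineSpan_pair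
    (left_mem_affineSpan_pair ℝ a b) (right_mem_affineSpan_pair ℝ a b) hc

theorem Sbtw.sSameSide₂₃ {s : AffineSubspace ℝ P} {x y z : P} (h : Sbtw ℝ x y z) (hx : x ∈ s)
    (hz : z ∉ s) : s.SSameSide y z := by
  obtain ⟨⟨t, ht, rfl⟩, -⟩ := sbtw_iff_mem_image_Ioo_and_ne.1 h
  exact AffineSubspace.sSameSide_lineMap_left hx hz ht.1

theorem sSameSide_of_diagonals_sbtw {a b c d x : P} (hac : Sbtw ℝ a x c) (hbd : Sbtw ℝ b x d)
    (hc : c ∉ line[ℝ, a, b]) (hd : d ∉ line[ℝ, a, b]) : line[ℝ, a, b].SSameSide c d :=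
  (hac.sSameSide₂₃ (left_mem_affineSpan_pair ℝ a b) hc).symm.trans
    (hbd.sSameSide₂₃ (right_mem_affineSpan_pair ℝ a b) hd)

end Affine

section Euclidean

variable {V P : Type*} [NormedAddCommGroup V] [InnerProductSpace ℝ V] [MetricSpace P]
  [NormedAddTorsor V P]

namespace EuclideanGeometry

theorem angle_lt_angle_of_sbtw {a q e b : P} (h : Sbtw ℝ a q e)
    (hb : ¬Collinear ℝ ({a, q, b} : Set P)) : ∠ a e b < ∠ a q b := by
  have hqbe : ¬Collinear ℝ ({q, b, e} : Set P) := fun hc => hb <|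
    collinear_triple_of_mem_affineSpan_pair
      (h.wbtw.collinear.mem_affineSpan_of_mem_of_ne (by simp) (by simp) (by simp) h.ne_right)
      (left_mem_affineSpan_pair ℝ q e)
      (hc.mem_affineSpan_of_mem_of_ne (by simp) (by simp) (by simp) h.ne_right)
  have hext : ∠ b q a = ∠ q b e + ∠ b e q := exterior_angle_eq_angle_add_angle a h
  rw [h.symm.angle_eq_right b, angle_comm b q a, angle_comm b e a] at hext
  linarith [angle_pos_of_not_collinear hqbe]

/-- Both sides equal `π` minus the vertical angle at the crossing point `x`. -/
theorem angle_add_angle_eq_of_diagonals_sbtw {a b c d x : P} (hac : Sbtw ℝ a x c)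
    (hbd : Sbtw ℝ b x d) : ∠ b a c + ∠ a b d = ∠ d c a + ∠ c d b := by
  have habx := angle_add_angle_add_angle_eq_pi b hac.ne_left
  have hcdx := angle_add_angle_add_angle_eq_pi d hac.ne_right
  have hvert := angle_eq_angle_of_angle_eq_pi_of_angle_eq_pi hac.angle₁₂₃_eq_pi hbd.angle₁₂₃_eq_pi
  linarith [hac.angle_eq_right b, hac.symm.angle_eq_right d, hbd.angle_eq_right a,
    hbd.symm.angle_eq_right c, angle_comm x b a, angle_comm x d c]

variable [Fact (finrank ℝ V = 2)]

theorem Sphere.angle_eq_angle_of_sSameSide {s : Sphere P} {a b p q : P} (ha : a ∈ s) (hb : b ∈ s)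
    (hp : p ∈ s) (hq : q ∈ s) (hpq : line[ℝ, a, b].SSameSide p q) : ∠ a p b = ∠ a q b := by
  rcases eq_or_ne a b with rfl | hab
  · rw [angle_self_of_ne, angle_self_of_ne] <;> rintro rfl
    exacts [hpq.2.2 (left_mem_affineSpan_pair ℝ _ _), hpq.2.1 (left_mem_affineSpan_pair ℝ _ _)]
  have : FiniteDimensional ℝ V := .of_fact_finrank_eq_two
  have : Module.Oriented ℝ V (Fin 2) := ⟨Basis.orientation (finBasisOfFinrankEq ℝ V Fact.out)⟩
  have hpa : p ≠ a := fun h => hpq.2.1 (h ▸ left_mem_affineSpan_pair ℝ a b)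
  have hpb : p ≠ b := fun h => hpq.2.1 (h ▸ right_mem_affineSpan_pair ℝ a b)
  have hqa : q ≠ a := fun h => hpq.2.2 (h ▸ left_mem_affineSpan_pair ℝ a b)
  have hqb : q ≠ b := fun h => hpq.2.2 (h ▸ right_mem_affineSpan_pair ℝ a b)
  -- the inscribed angle theorem only gives `2 • ∡ a p b = 2 • ∡ a q b`; the sides fix the sign
  have hsign : (∡ a p b).sign = (∡ a q b).sign :=
    (hpq.oangle_sign_eq (left_mem_affineSpan_pair ℝ a b) (right_mem_affineSpan_pair ℝ a b)).symm
  have hne : (∡ a p b).sign ≠ 0 := Real.Angle.sign_ne_zero_iff.2 <|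
    oangle_ne_zero_and_ne_pi_iff_affineIndependent.2 <|
      affineIndependent_of_ne_of_mem_of_notMem_of_mem hab (left_mem_affineSpan_pair ℝ a b)
        hpq.2.1 (right_mem_affineSpan_pair ℝ a b)
  rw [angle_eq_iff_oangle_eq_of_sign_eq hpa.symm hpb.symm hqa.symm hqb.symm hsign]
  exact (Real.Angle.two_zsmul_eq_iff_eq hne hsign).1 <|
    Sphere.two_zsmul_oangle_eq ha hp hq hb hpa hpb hqa hqb

/-- Extend `a q` beyond `q` to the point `e` of the circle: `∠ a p b = ∠ a e b` is inscribed,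
and `∠ a e b < ∠ a q b` by the exterior angle theorem in the triangle `q e b`. -/
theorem Sphere.angle_lt_angle_of_dist_center_lt {s : Sphere P} {a b p q : P} (hab : a ≠ b)
    (ha : a ∈ s) (hb : b ∈ s) (hp : p ∈ s) (hpq : line[ℝ, a, b].SSameSide p q)
    (hq : dist q s.center < s.radius) : ∠ a p b < ∠ a q b := by
  set e := s.secondInter a (q -ᵥ a)
  have hqe : Sbtw ℝ a q e := Sphere.sbtw_secondInter ha hq
  have hqe_side : line[ℝ, a, b].SSameSide q e := by
    obtain ⟨t, ht, he⟩ := hqe.right_mem_image_Ioi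
    rw [← he]
    exact AffineSubspace.sSameSide_lineMap_right (left_mem_affineSpan_pair ℝ a b) hpq.2.2
      (zero_lt_one.trans ht)
  have hinscribed : ∠ a p b = ∠ a e b := Sphere.angle_eq_angle_of_sSameSide ha hb hp
    ((Sphere.secondInter_mem _).2 ha) (hpq.trans hqe_side)
  have haqb : ¬Collinear ℝ ({a, q, b} : Set P) := fun hc =>
    hpq.2.2 (hc.mem_affineSpan_of_mem_of_ne (by simp) (by simp) (by simp) hab)
  exact hinscribed ▸ angle_lt_angle_of_sbtw hqe haqb

end EuclideanGeometry

end Euclidean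

theorem StrictlyInsideCircumcircle.angle_lt_angle {A B C D X : Plane}
    {hABC : AffineIndependent ℝ ![A, B, C]} (hin : StrictlyInsideCircumcircle D A B C hABC)
    (hABD : AffineIndependent ℝ ![A, B, D]) (hBCD : AffineIndependent ℝ ![B, C, D])
    (hAXC : Sbtw ℝ A X C) (hBXD : Sbtw ℝ B X D) :
    ∠ A C B < ∠ A D B ∧ ∠ B A C < ∠ B D C := by
  have hA := (⟨![A, B, C], hABC⟩ : Affine.Simplex ℝ Plane 2).mem_circumsphere 0
  have hB := (⟨![A, B, C], hABC⟩ : Affine.Simplex ℝ Plane 2).mem_circumsphere 1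
  have hC := (⟨![A, B, C], hABC⟩ : Affine.Simplex ℝ Plane 2).mem_circumsphere 2
  have hA_BC : A ∉ line[ℝ, B, C] := fun h => affineIndependent_iff_not_collinear_set.1 hABC
    (collinear_insert_of_mem_affineSpan_pair h)
  exact ⟨Sphere.angle_lt_angle_of_dist_center_lt (hABC.injective.ne (by decide : (0 : Fin 3) ≠ 1))
      hA hB hC (sSameSide_of_diagonals_sbtw hAXC hBXD hABC.notMem_affineSpan_pair
        hABD.notMem_affineSpan_pair) hin,
    Sphere.angle_lt_angle_of_dist_center_lt (hABC.injective.ne (by decide : (1 : Fin 3) ≠ 2))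
      hB hC hA (sSameSide_of_diagonals_sbtw hBXD hAXC.symm hBCD.notMem_affineSpan_pair
        hA_BC).symm hin⟩

/-- Flipping a non-Delaunay edge strictly increases the minimum of the six
angles of the two triangles in the quadrilateral: if, for the strictly convex
quadrilateral `ABCD` (diagonals cross, no three points collinear), `D` lies
strictly inside the circumcircle of `ABC`, then the minimum angle among the
triangles `ABD` and `BCD` is strictly greater than the minimum angle among the
triangles `ABC` and `ACD`. -/
theorem flip_increases_min_angle (A B C D : Plane)
    (hABC : AffineIndependent ℝ ![A, B, C])
    (hACD : AffineIndependent ℝ ![A, C, D])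
    (hABD : AffineIndependent ℝ ![A, B, D])
    (hBCD : AffineIndependent ℝ ![B, C, D])
    (hconv : (openSegment ℝ A C ∩ openSegment ℝ B D).Nonempty)
    (hin : StrictlyInsideCircumcircle D A B C hABC) :
    min (minAngle A B C) (minAngle A C D) <
      min (minAngle A B D) (minAngle B C D) := by
  have hAC : A ≠ C := hABC.injective.ne (by decide : (0 : Fin 3) ≠ 2)
  obtain ⟨X, hXAC, hXBD⟩ := hconv
  have hAXC := sbtw_of_mem_openSegment hXAC hAC
  have hBXD := sbtw_of_mem_openSegment hXBD (hABD.injective.ne (by decide : (1 : Fin 3) ≠ 2))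
  obtain ⟨hACB, hBAC⟩ := hin.angle_lt_angle hABD hBCD hAXC hBXD
  have hX₁ := angle_add_angle_eq_of_diagonals_sbtw hAXC hBXD
  have hX₂ := angle_add_angle_eq_of_diagonals_sbtw hBXD hAXC.symm
  have hA := angle_add_angle_eq_of_sbtw_of_sameRay hBXD hAXC.wbtw.sameRay_vsub_left hAC.symm
  have hC := angle_add_angle_eq_of_sbtw_of_sameRay hBXD hAXC.symm.wbtw.sameRay_vsub_left hAC
  have hCAD : 0 < ∠ C A D := angle_pos_of_not_collinear <| by
    rw [Set.insert_comm]; exact affineIndependent_iff_not_collinear_set.1 hACD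
  have hACB_pos : 0 < ∠ A C B := angle_pos_of_not_collinear <| by
    rw [Set.pair_comm]; exact affineIndependent_iff_not_collinear_set.1 hABC
  have hold : min (minAngle A B C) (minAngle A C D) ≤ ∠ B A C ∧
      min (minAngle A B C) (minAngle A C D) ≤ ∠ A C B ∧
      min (minAngle A B C) (minAngle A C D) ≤ ∠ C A D ∧
      min (minAngle A B C) (minAngle A C D) ≤ ∠ A C D := by
    simp only [minAngle, min_le_iff, le_refl, true_or, or_true, and_self]
  refine lt_min (lt_min ?_ (lt_min ?_ ?_)) (lt_min ?_ (lt_min ?_ ?_)) <;>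
    linarith [angle_comm B C A, angle_comm D A C, angle_comm D C A, angle_comm C D B]
end
end
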